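/- Let P be any finite group, let R be any commutative ring, let G = Sym(P) be the symmetric group on the underlying set of P, and regard P as a subgroup of G via the Cayley embedding i_P. Then for every n ≥ 0, every x ∈ H^n(G; R), every subgroup Q ≤ P, and every injective group homomorphism ψ : Q → P, one has ψ^*(i_P^*(x)) = Res^P_Q(i_P^*(x)) in H^n(Q; R). -/

import Mathlib

/-!
Left multiplication makes `P` a free `Q`-set in two ways, through `ψ` and through the inclusion.
A free `Q`-set is `Q × (orbits)`, and here both orbit sets have `|P| / |Q|` elements, so the two
`Q`-sets are isomorphic: some `σ ∈ Sym(P)` conjugates `i_P ∘ ψ` into `i_P ∘ incl`. It remains to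
see that an inner automorphism `c_σ` of a group `G` acts trivially on `H^*(G; R)`. On
inhomogeneous cochains the prism operator
  `(hφ)(g₀, …, gₙ₋₁) = ∑ᵢ (-1)ⁱ φ(g₀, …, gᵢ₋₁, σ⁻¹, σgᵢσ⁻¹, …, σgₙ₋₁σ⁻¹)`
satisfies `hd + dh = c_σ^* - id`.
-/

open CategoryTheory groupCohomology

noncomputable section

variable {k : Type} [CommRing k]

def trivialCochainsMap {G H : Type} [Group G] [Group H] (f : H →* G) :
    inhomogeneousCochains (Rep.trivial k G k) ⟶ inhomogeneousCochains (Rep.trivial k H k) where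
  f n := ModuleCat.ofHom
    { toFun := fun φ (v : Fin n → H) => φ (fun i => f (v i))
      map_add' := fun _ _ => rfl
      map_smul' := fun _ _ => rfl }
  comm' i j hij := by
    obtain rfl : i + 1 = j := hij
    ext φ g
    simp only [ModuleCat.hom_comp, LinearMap.comp_apply, CochainComplex.of_d]
    show (inhomogeneousCochains.d (Rep.trivial k H k) i).hom (fun v => φ fun l => f (v l)) g
      = (inhomogeneousCochains.d (Rep.trivial k G k) i).hom φ (fun l => f (g l))
    simp only [inhomogeneousCochains.d_hom_apply, Rep.trivial_ρ]
    congr 1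
    refine Finset.sum_congr rfl fun j _ => ?_
    have h : (fun l => f (Fin.contractNth j (· * ·) g l))
        = Fin.contractNth j (· * ·) (fun l => f (g l)) := by
      funext l
      unfold Fin.contractNth
      split_ifs <;> simp [map_mul]
    rw [h]

/-- The map `f^* : Hⁿ(G; k) → Hⁿ(H; k)` on group cohomology with (trivial) coefficients
in `k` induced by a group homomorphism `f : H →* G`. -/
def cohomologyRes {G H : Type} [Group G] [Group H] (f : H →* G) (n : ℕ) :
    groupCohomology (Rep.trivial k G k) n ⟶ groupCohomology (Rep.trivial k H k) n :=
  HomologicalComplex.homologyMap (trivialCochainsMap f) n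

open Finset

theorem trivialCochainsMap_comp {G H K : Type} [Group G] [Group H] [Group K]
    (f : H →* G) (h : K →* H) :
    trivialCochainsMap (k := k) (f.comp h) = trivialCochainsMap f ≫ trivialCochainsMap h :=
  rfl

theorem cohomologyRes_comp {G H K : Type} [Group G] [Group H] [Group K]
    (f : H →* G) (h : K →* H) (n : ℕ) (x : groupCohomology (Rep.trivial k G k) n) :
    cohomologyRes h n (cohomologyRes f n x) = cohomologyRes (f.comp h) n x := by
  simp only [cohomologyRes, trivialCochainsMap_comp, HomologicalComplex.homologyMap_comp]
  rfl

section Sequences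

variable {α : Type*}

-- Cochains are evaluated on `ℕ`-indexed sequences, of which only an initial segment matters;
-- this keeps the face identities below free of `Fin` casts.

def seqRestrict (n : ℕ) (e : ℕ → α) : Fin n → α := fun l => e l

def seqExtend [One α] {n : ℕ} (g : Fin n → α) : ℕ → α := fun l =>
  if h : l < n then g ⟨l, h⟩ else 1

theorem seqRestrict_seqExtend [One α] {n : ℕ} (g : Fin n → α) :
    seqRestrict n (seqExtend g) = g := by
  funext l
  simp [seqRestrict, seqExtend]

theorem seqRestrict_congr {n : ℕ} {e e' : ℕ → α} (h : ∀ l < n, e l = e' l) :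
    seqRestrict n e = seqRestrict n e' :=
  funext fun l => h l l.isLt

def seqTail (e : ℕ → α) : ℕ → α := fun l => e (l + 1)

def seqContract [Mul α] (j : ℕ) (e : ℕ → α) : ℕ → α := fun l =>
  if l < j then e l else if l = j then e l * e (l + 1) else e (l + 1)

theorem contractNth_seqRestrict [Mul α] (n : ℕ) (e : ℕ → α) (j : Fin (n + 1)) :
    Fin.contractNth j (· * ·) (seqRestrict (n + 1) e) = seqRestrict n (seqContract j e) := by
  funext l
  simp only [Fin.contractNth, seqRestrict, seqContract, Fin.val_castSucc, Fin.val_succ]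

end Sequences

section PrismSequences

variable {G : Type*} [Group G]

def prismFace (σ : G) (i : ℕ) (e : ℕ → G) : ℕ → G := fun l =>
  if l < i then e l else if l = i then σ⁻¹ else σ * e (l - 1) * σ⁻¹

theorem seqTail_prismFace_zero (σ : G) (e : ℕ → G) :
    seqTail (prismFace σ 0 e) = fun l => σ * e l * σ⁻¹ := by
  funext l
  simp [seqTail, prismFace]

theorem seqTail_prismFace_succ (σ : G) (i : ℕ) (e : ℕ → G) :
    seqTail (prismFace σ (i + 1) e) = prismFace σ i (seqTail e) := by
  funext l
  simp only [seqTail, prismFace]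
  split_ifs <;> first | omega | grind

theorem seqContract_prismFace_succ_of_lt (σ : G) {i j : ℕ} (h : j < i) (e : ℕ → G) :
    seqContract j (prismFace σ (i + 1) e) = prismFace σ i (seqContract j e) := by
  funext l
  simp only [seqContract, prismFace]
  split_ifs <;> first | omega | grind

theorem seqContract_succ_prismFace_of_le (σ : G) {i j : ℕ} (h : i ≤ j) (e : ℕ → G) :
    seqContract (j + 1) (prismFace σ i e) = prismFace σ i (seqContract j e) := by
  funext l
  simp only [seqContract, prismFace]
  split_ifs <;> first | omega | grind | simp [mul_assoc, show l - 1 + 1 = l by omega]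

theorem seqContract_prismFace_succ_self (σ : G) (i : ℕ) (e : ℕ → G) :
    seqContract i (prismFace σ (i + 1) e) = seqContract i (prismFace σ i e) := by
  funext l
  simp only [seqContract, prismFace]
  split_ifs <;> first | omega | grind | simp [mul_assoc]

theorem seqContract_prismFace_self_of_lt (σ : G) {i l : ℕ} (hl : l < i) (e : ℕ → G) :
    seqContract i (prismFace σ i e) l = e l := by
  simp [seqContract, prismFace, hl]

theorem seqRestrict_prismFace_congr (σ : G) {m i : ℕ} (hi : i ≤ m) {e e' : ℕ → G}
    (h : ∀ l < m, e l = e' l) :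
    seqRestrict (m + 1) (prismFace σ i e) = seqRestrict (m + 1) (prismFace σ i e') :=
  seqRestrict_congr fun l hl => by
    simp only [prismFace]
    split_ifs
    · exact h l (by omega)
    · rfl
    · rw [h (l - 1) (by omega)]

end PrismSequences

section AlternatingSums

variable {M : Type*} [AddCommGroup M]

theorem sum_range_succ_sum_range_succ (f : ℕ → ℕ → M) (n : ℕ) :
    ∑ i ∈ range (n + 1), ∑ j ∈ range (n + 1), f i j
      = ∑ i ∈ range n, ∑ j ∈ range n, f i j + ∑ i ∈ range n, f i n
        + ∑ j ∈ range (n + 1), f n j := by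
  rw [sum_range_succ _ n]
  simp only [sum_range_succ (f _) n, sum_add_distrib]

theorem sum_neg_one_pow_smul_range_succ' (m : ℕ) (A B : ℕ → M) (h : ∀ i ≤ m, A (i + 1) = B i) :
    ∑ i ∈ range (m + 2), (-1 : ℤ) ^ i • A i = A 0 - ∑ i ∈ range (m + 1), (-1 : ℤ) ^ i • B i := by
  rw [sum_range_succ', sub_eq_neg_add, ← sum_neg_distrib]
  congr 1
  · refine sum_congr rfl fun i hi => ?_
    rw [h i (Nat.lt_succ_iff.mp (mem_range.mp hi)), pow_succ, mul_neg_one, neg_smul]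
  · simp

theorem sum_sum_neg_one_pow_smul_of_prism (m : ℕ) (C D : ℕ → ℕ → M)
    (hlow : ∀ i j, j < i → i ≤ m → C (i + 1) j = D i j)
    (hhigh : ∀ i j, i ≤ j → j ≤ m → C i (j + 1) = D i j)
    (hdiag : ∀ i ≤ m, C (i + 1) i = C i i) :
    ∑ i ∈ range (m + 2), ∑ j ∈ range (m + 2), (-1 : ℤ) ^ (i + j) • C i j
      = C (m + 1) (m + 1)
        - ∑ i ∈ range (m + 1), ∑ j ∈ range (m + 1), (-1 : ℤ) ^ (i + j) • D i j := by
  induction m with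
  | zero =>
    simp [sum_range_succ, hhigh 0 0 le_rfl le_rfl, hdiag 0 le_rfl]
    abel
  | succ m ih =>
    have hrow : ∑ j ∈ range (m + 1 + 2), (-1 : ℤ) ^ (m + 1 + 1 + j) • C (m + 1 + 1) j
        = C (m + 1 + 1) (m + 1 + 1) - C (m + 1) (m + 1)
          - ∑ j ∈ range (m + 1), (-1 : ℤ) ^ (m + 1 + j) • D (m + 1) j := by
      rw [sum_range_succ, sum_range_succ, Even.neg_one_pow ⟨m + 2, rfl⟩,
        Odd.neg_one_pow ⟨m + 1, by ring⟩, hdiag (m + 1) le_rfl, sub_eq_add_neg (_ - _),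
        ← sum_neg_distrib]
      have hterm : ∀ j ∈ range (m + 1), (-1 : ℤ) ^ (m + 1 + 1 + j) • C (m + 1 + 1) j
          = -((-1 : ℤ) ^ (m + 1 + j) • D (m + 1) j) := fun j hj => by
        rw [hlow (m + 1) j (by simpa using hj) le_rfl, ← neg_smul, add_right_comm, pow_succ,
          mul_neg_one]
      rw [sum_congr rfl hterm]
      abel
    have hcol : ∑ i ∈ range (m + 1 + 1), (-1 : ℤ) ^ (i + (m + 1 + 1)) • C i (m + 1 + 1)
        = -∑ i ∈ range (m + 1 + 1), (-1 : ℤ) ^ (i + (m + 1)) • D i (m + 1) := by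
      rw [← sum_neg_distrib]
      refine sum_congr rfl fun i hi => ?_
      rw [hhigh i (m + 1) (Nat.lt_succ_iff.mp (mem_range.mp hi)) le_rfl, ← neg_smul,
        ← add_assoc, pow_succ, mul_neg_one]
    rw [sum_range_succ_sum_range_succ _ (m + 2), hrow, hcol,
      ih (fun i j hji hi => hlow i j hji (by omega)) (fun i j hij hj => hhigh i j hij (by omega))
        (fun i hi => hdiag i (by omega)),
      sum_range_succ_sum_range_succ (fun i j => (-1 : ℤ) ^ (i + j) • D i j) (m + 1),
      sum_range_succ (fun i => (-1 : ℤ) ^ (i + (m + 1)) • D i (m + 1)) (m + 1),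
      sum_range_succ (fun j => (-1 : ℤ) ^ (m + 1 + j) • D (m + 1) j) (m + 1)]
    abel

end AlternatingSums

section SequenceCochains

variable {G M : Type*} [AddCommGroup M]

def seqCoboundary [Mul G] (n : ℕ) (Φ : (ℕ → G) → M) (e : ℕ → G) : M :=
  Φ (seqTail e) + ∑ j ∈ range (n + 1), (-1 : ℤ) ^ (j + 1) • Φ (seqContract j e)

def prismOperator [Group G] (σ : G) (n : ℕ) (Φ : (ℕ → G) → M) (e : ℕ → G) : M :=
  ∑ i ∈ range (n + 1), (-1 : ℤ) ^ i • Φ (prismFace σ i e)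

theorem neg_one_pow_smul_neg_one_pow_succ_smul (i j : ℕ) (x : M) :
    (-1 : ℤ) ^ i • (-1 : ℤ) ^ (j + 1) • x = -((-1 : ℤ) ^ (i + j) • x) := by
  rw [smul_smul, ← pow_add, ← add_assoc, pow_succ, mul_neg_one, neg_smul]

theorem prismOperator_seqCoboundary_add_seqCoboundary_prismOperator [Group G] (σ : G) (m : ℕ)
    (Φ : (ℕ → G) → M) (e : ℕ → G) :
    prismOperator σ (m + 1) (seqCoboundary (m + 1) Φ) e + seqCoboundary m (prismOperator σ m Φ) e
      = Φ (fun l => σ * e l * σ⁻¹) - Φ (seqContract (m + 1) (prismFace σ (m + 1) e)) := by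
  have hA := sum_neg_one_pow_smul_range_succ' m (fun i => Φ (seqTail (prismFace σ i e)))
    (fun i => Φ (prismFace σ i (seqTail e))) fun i _ => by rw [seqTail_prismFace_succ]
  have hC := sum_sum_neg_one_pow_smul_of_prism m (fun i j => Φ (seqContract j (prismFace σ i e)))
    (fun i j => Φ (prismFace σ i (seqContract j e)))
    (fun i j hji _ => by rw [seqContract_prismFace_succ_of_lt σ hji])
    (fun i j hij _ => by rw [seqContract_succ_prismFace_of_le σ hij])
    (fun i _ => by rw [seqContract_prismFace_succ_self])
  have hswap (i j : ℕ) (x : M) :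
      (-1 : ℤ) ^ (j + 1) • (-1 : ℤ) ^ i • x = -((-1 : ℤ) ^ (i + j) • x) := by
    rw [smul_comm, neg_one_pow_smul_neg_one_pow_succ_smul]
  simp only [seqTail_prismFace_zero] at hA
  simp only [prismOperator, seqCoboundary, smul_add, sum_add_distrib, smul_sum,
    neg_one_pow_smul_neg_one_pow_succ_smul, hswap, sum_neg_distrib, hA, hC]
  rw [sum_comm (s := range (m + 1))]
  abel

end SequenceCochains

section ConjugationHomotopy

variable {G : Type} [Group G]

theorem inhomogeneousCochains_d_seqRestrict (n : ℕ) (φ : (Fin n → G) → k) (e : ℕ → G) :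
    (inhomogeneousCochains.d (Rep.trivial k G k) n).hom φ (seqRestrict (n + 1) e)
      = seqCoboundary n (fun e => φ (seqRestrict n e)) e := by
  simp only [inhomogeneousCochains.d_hom_apply, contractNth_seqRestrict, seqCoboundary]
  congr 1
  rw [Fin.sum_univ_eq_sum_range
    (fun j => (-1 : k) ^ (j + 1) • φ (seqRestrict n (seqContract j e)))]
  refine sum_congr rfl fun j _ => ?_
  rw [← Int.cast_smul_eq_zsmul k]
  push_cast
  rfl

def conjPrism (σ : G) (n : ℕ) : ((Fin (n + 1) → G) → k) →ₗ[k] ((Fin n → G) → k) where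
  toFun φ g := prismOperator σ n (fun e => φ (seqRestrict (n + 1) e)) (seqExtend g)
  map_add' φ ψ := by
    funext g
    simp only [prismOperator, Pi.add_apply, smul_add, sum_add_distrib]
  map_smul' c φ := by
    funext g
    simp only [prismOperator, Pi.smul_apply, smul_eq_mul, RingHom.id_apply, mul_sum,
      mul_smul_comm]

theorem conjPrism_seqRestrict (σ : G) (n : ℕ) (φ : (Fin (n + 1) → G) → k) (e : ℕ → G) :
    conjPrism σ n φ (seqRestrict n e)
      = prismOperator σ n (fun e => φ (seqRestrict (n + 1) e)) e := by
  change prismOperator σ n (fun e => φ (seqRestrict (n + 1) e)) (seqExtend (seqRestrict n e)) = _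
  refine sum_congr rfl fun i hi => ?_
  dsimp only
  rw [seqRestrict_prismFace_congr σ (Nat.lt_succ_iff.mp (mem_range.mp hi))
    fun l hl => congrFun (seqRestrict_seqExtend (seqRestrict n e)) ⟨l, hl⟩]

theorem conjPrism_d_zero (σ : G) (φ : (Fin 0 → G) → k) :
    conjPrism σ 0 ((inhomogeneousCochains.d (Rep.trivial k G k) 0).hom φ) = 0 := by
  funext g
  change prismOperator σ 0 (fun e => (inhomogeneousCochains.d (Rep.trivial k G k) 0).hom φ
    (seqRestrict 1 e)) (seqExtend g) = 0
  rw [prismOperator, sum_range_one, pow_zero, one_smul, inhomogeneousCochains_d_seqRestrict,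
    seqCoboundary, sum_range_one, Subsingleton.elim (seqRestrict 0 (seqContract 0 _))
      (seqRestrict 0 (seqTail (prismFace σ 0 (seqExtend g)))), zero_add, pow_one, neg_one_smul,
    add_neg_cancel]

theorem conjPrism_d_add_d_conjPrism (σ : G) (m : ℕ) (φ : (Fin (m + 1) → G) → k)
    (g : Fin (m + 1) → G) :
    conjPrism σ (m + 1) ((inhomogeneousCochains.d (Rep.trivial k G k) (m + 1)).hom φ) g
      + (inhomogeneousCochains.d (Rep.trivial k G k) m).hom (conjPrism σ m φ) g
      = φ (fun l => σ * g l * σ⁻¹) - φ g := by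
  rw [← seqRestrict_seqExtend g]
  generalize seqExtend g = e
  have hlast : seqRestrict (m + 1) (seqContract (m + 1) (prismFace σ (m + 1) e))
      = seqRestrict (m + 1) e :=
    seqRestrict_congr fun l hl => seqContract_prismFace_self_of_lt σ hl e
  have h := prismOperator_seqCoboundary_add_seqCoboundary_prismOperator σ m
    (fun e => φ (seqRestrict (m + 1) e)) e
  simp only [hlast] at h
  have hd : (fun e => (inhomogeneousCochains.d (Rep.trivial k G k) (m + 1)).hom φ
      (seqRestrict (m + 1 + 1) e)) = seqCoboundary (m + 1) fun e => φ (seqRestrict (m + 1) e) :=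
    funext fun e => inhomogeneousCochains_d_seqRestrict (m + 1) φ e
  have hs : (fun e => conjPrism σ m φ (seqRestrict m e))
      = prismOperator σ m fun e => φ (seqRestrict (m + 1) e) :=
    funext fun e => conjPrism_seqRestrict σ m φ e
  rw [conjPrism_seqRestrict, inhomogeneousCochains_d_seqRestrict, hd, hs]
  exact h

def conjPrismHom (σ : G) (i j : ℕ) :
    (inhomogeneousCochains (Rep.trivial k G k)).X i ⟶
      (inhomogeneousCochains (Rep.trivial k G k)).X j :=
  if h : i = j + 1 then
    eqToHom (congrArg (inhomogeneousCochains (Rep.trivial k G k)).X h) ≫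
      ModuleCat.ofHom (conjPrism σ j)
  else 0

theorem conjPrismHom_succ (σ : G) (j : ℕ) :
    conjPrismHom (k := k) σ (j + 1) j = ModuleCat.ofHom (conjPrism σ j) := by
  simp [conjPrismHom]

def conjHomotopy (σ : G) :
    Homotopy (trivialCochainsMap (k := k) (MulAut.conj σ).toMonoidHom)
      (𝟙 (inhomogeneousCochains (Rep.trivial k G k))) where
  hom := conjPrismHom σ
  zero i j hij := dif_neg fun h => hij h.symm
  comm i := by
    cases i with
    | zero =>
      rw [Homotopy.dNext_cochainComplex, Homotopy.prevD_zero_cochainComplex, conjPrismHom_succ,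
        inhomogeneousCochains.d_def, add_zero]
      refine ModuleCat.hom_ext (LinearMap.ext fun φ => funext fun g => ?_)
      change φ _ = conjPrism σ 0 ((inhomogeneousCochains.d (Rep.trivial k G k) 0).hom φ) g + φ g
      rw [conjPrism_d_zero, Pi.zero_apply, zero_add]
      exact congrArg φ (Subsingleton.elim _ _)
    | succ m =>
      rw [Homotopy.dNext_cochainComplex, Homotopy.prevD_succ_cochainComplex, conjPrismHom_succ,
        conjPrismHom_succ, inhomogeneousCochains.d_def, inhomogeneousCochains.d_def]
      refine ModuleCat.hom_ext (LinearMap.ext fun φ => funext fun g => ?_)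
      exact sub_eq_iff_eq_add.mp (conjPrism_d_add_d_conjPrism (k := k) σ m φ g).symm

theorem cohomologyRes_conj (σ : G) (n : ℕ) (x : groupCohomology (Rep.trivial k G k) n) :
    cohomologyRes (MulAut.conj σ).toMonoidHom n x = x := by
  rw [cohomologyRes, (conjHomotopy σ).homologyMap_eq n, HomologicalComplex.homologyMap_id]
  rfl

end ConjugationHomotopy

section FreeActions

universe u v

variable {Q : Type u} {X : Type v} [Group Q]

theorem exists_prod_equiv_of_free (a : Q →* Equiv.Perm X) (ha : ∀ q x, a q x = x → q = 1) :
    ∃ (Y : Type v) (e : Q × Y ≃ X), ∀ q p, e (q * p.1, p.2) = a q (e p) := by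
  let := MulAction.compHom X a
  let e : Q × MulAction.orbitRel.Quotient Q X → X := fun p => a p.1 p.2.out
  have he : Function.Bijective e := by
    constructor
    · rintro ⟨q, c⟩ ⟨q', c'⟩ (h : a q c.out = a q' c'.out)
      obtain rfl : c = c' := by
        rw [← Quotient.out_equiv_out]
        refine MulAction.orbitRel_apply.mpr ⟨q⁻¹ * q', ?_⟩
        change a (q⁻¹ * q') c'.out = c.out
        rw [map_mul, Equiv.Perm.mul_apply, ← h, map_inv, Equiv.Perm.coe_inv,
          Equiv.symm_apply_apply]
      have hq := ha (q'⁻¹ * q) c.out (by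
        rw [map_mul, Equiv.Perm.mul_apply, h, map_inv, Equiv.Perm.coe_inv, Equiv.symm_apply_apply])
      rw [inv_mul_eq_one.mp hq]
    · intro x
      obtain ⟨q, hq⟩ :=
        MulAction.orbitRel_apply.mp (Quotient.mk_out (s := MulAction.orbitRel Q X) x)
      refine ⟨(q⁻¹, ⟦x⟧), ?_⟩
      change a q⁻¹ _ = x
      rw [← hq]
      change a q⁻¹ (a q x) = x
      rw [map_inv, Equiv.Perm.coe_inv, Equiv.symm_apply_apply]
  refine ⟨_, Equiv.ofBijective e he, fun q p => ?_⟩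
  simp [e, map_mul]

theorem exists_perm_mul_mul_inv_eq_of_free [Finite Q] [Finite X] (a b : Q →* Equiv.Perm X)
    (ha : ∀ q x, a q x = x → q = 1) (hb : ∀ q x, b q x = x → q = 1) :
    ∃ σ : Equiv.Perm X, ∀ q, σ * a q * σ⁻¹ = b q := by
  obtain ⟨Y, e, he⟩ := exists_prod_equiv_of_free a ha
  obtain ⟨Z, f, hf⟩ := exists_prod_equiv_of_free b hb
  have : Finite Y := Finite.of_injective (fun y => e (1, y)) fun y y' h => by simpa using h
  have : Finite Z := Finite.of_injective (fun z => f (1, z)) fun z z' h => by simpa using h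
  have hcard : Nat.card Y = Nat.card Z := by
    have h := (Nat.card_congr e).trans (Nat.card_congr f).symm
    rw [Nat.card_prod, Nat.card_prod] at h
    exact Nat.eq_of_mul_eq_mul_left Nat.card_pos h
  obtain ⟨θ⟩ := Finite.card_eq.mp hcard
  refine ⟨e.symm.trans ((Equiv.prodCongr (Equiv.refl Q) θ).trans f), fun q => ?_⟩
  rw [mul_inv_eq_iff_eq_mul]
  ext x
  obtain ⟨p, rfl⟩ := e.surjective x
  simp [← he, ← hf]

end FreeActions

theorem eq_one_of_toPermHom_comp_apply_eq_self {Q P : Type*} [Group Q] [Group P] {f : Q →* P}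
    (hf : Function.Injective f) {q : Q} {x : P} (h : (MulAction.toPermHom P P).comp f q x = x) :
    q = 1 :=
  hf (by simpa using h)

/-- **Theorem 3 of Leary–Schuster–Yagita** (arbitrary coefficient ring).
Let `P` be a finite group, `R` a commutative ring, `G = Sym(P)`, with `P ≤ G`
via the Cayley embedding `i_P`.  For every `x ∈ Hⁿ(G; R)`, every subgroup
`Q ≤ P`, and every injective homomorphism `ψ : Q → P`,
`ψ^*(i_P^*(x)) = Res^P_Q(i_P^*(x))`. -/
theorem stmt_3 (R : Type) [CommRing R] (P : Type) [Group P] [Finite P] (n : ℕ)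
    (x : groupCohomology (Rep.trivial R (Equiv.Perm P) R) n)
    (Q : Subgroup P) (ψ : Q →* P) (hψ : Function.Injective ψ) :
    cohomologyRes ψ n (cohomologyRes (MulAction.toPermHom P P) n x)
      = cohomologyRes Q.subtype n (cohomologyRes (MulAction.toPermHom P P) n x) := by
  obtain ⟨σ, hσ⟩ := exists_perm_mul_mul_inv_eq_of_free _ _
    (fun _ _ => eq_one_of_toPermHom_comp_apply_eq_self hψ)
    (fun _ _ => eq_one_of_toPermHom_comp_apply_eq_self Q.subtype_injective)
  have hconj : (MulAut.conj σ).toMonoidHom.comp ((MulAction.toPermHom P P).comp ψ)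
      = (MulAction.toPermHom P P).comp Q.subtype :=
    MonoidHom.ext hσ
  rw [cohomologyRes_comp, cohomologyRes_comp, ← hconj,
    ← cohomologyRes_comp (MulAut.conj σ).toMonoidHom, cohomologyRes_conj]
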